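/- arXiv:1711.06015 — 2 statements merged into one kernel-verified Lean document; each statement's English description precedes it below -/
import Mathlib

section
/- Let η > 0 and F(x) = 1/(η + 1 + x²) for x ∈ ℝ. Then for every integer a ≥ 1 and all x ∈ ℝ, |F^{(a)}(x)| ≤ (a!/ν^a) F(x), where ν = (1/2)·min{√η, 1}. -/
open Complex

lemma aux_im {f : ℝ → ℂ} {f' : ℂ} {x : ℝ} (hf : HasDerivAt f f' x) :
    HasDerivAt (fun y => (f y).im) f'.im x := by
  have := (Complex.imCLM.hasFDerivAt.comp x hf.hasFDerivAt).hasDerivAt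
  exact this.congr_deriv (by simp)

-- derivative of (y + I*b)^(-(n+1) : ℤ) over ℝ
lemma aux_zpow (b : ℝ) (hb : 0 < b) (n : ℤ) (x : ℝ) :
    HasDerivAt (fun y : ℝ => ((y : ℂ) + I * b) ^ n)
      (n * ((x : ℂ) + I * b) ^ (n - 1)) x := by
  have hne : (x : ℂ) + I * b ≠ 0 := by
    intro h
    have : ((x : ℂ) + I * b).im = 0 := by rw [h]; simp
    simp at this
    linarith
  have h1 : HasDerivAt (fun z : ℂ => (z + I * b) ^ n)
      (n * ((x : ℂ) + I * b) ^ (n - 1) * 1) (x : ℂ) := by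
    have := (hasDerivAt_zpow n ((x : ℂ) + I * b) (Or.inl hne)).comp (x : ℂ)
      ((hasDerivAt_id (x : ℂ)).add_const (I * b))
    exact this
  simpa using h1.comp_ofReal

lemma aux_formula (η : ℝ) (hη : 0 < η) :
    ∀ (a : ℕ) (x : ℝ), iteratedDeriv a (fun y : ℝ => 1 / (η + 1 + y ^ 2)) x
      = (((-1 : ℂ)) ^ (a + 1) * (a.factorial : ℂ) / (Real.sqrt (η + 1) : ℂ)
          * ((x : ℂ) + I * Real.sqrt (η + 1)) ^ (-(a + 1) : ℤ)).im := by
  set b : ℝ := Real.sqrt (η + 1) with hbdef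
  have hb : 0 < b := Real.sqrt_pos.mpr (by linarith)
  have hb2 : b ^ 2 = η + 1 := Real.sq_sqrt (by linarith)
  intro a
  induction a with
  | zero =>
    intro x
    rw [iteratedDeriv_zero]
    have hpos : 0 < η + 1 + x ^ 2 := by positivity
    have hns : Complex.normSq ((x : ℂ) + I * b) = η + 1 + x ^ 2 := by
      simp [Complex.normSq_apply]
      nlinarith
    rw [show (-((0 : ℕ) + 1) : ℤ) = -1 by norm_num]
    simp only [pow_one, Nat.factorial_zero, Nat.cast_one, mul_one, zpow_neg_one,
      Complex.div_im, Complex.mul_im, Complex.mul_re, Complex.inv_im, Complex.inv_re, hns]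
    simp
    field_simp
  | succ n ih =>
    intro x
    rw [iteratedDeriv_succ]
    have hfun : iteratedDeriv n (fun y : ℝ => 1 / (η + 1 + y ^ 2))
        = fun x : ℝ => (((-1 : ℂ)) ^ (n + 1) * (n.factorial : ℂ) / (b : ℂ)
          * ((x : ℂ) + I * b) ^ (-(n + 1) : ℤ)).im := funext ih
    rw [hfun]
    have hd : HasDerivAt (fun x : ℝ => ((-1 : ℂ)) ^ (n + 1) * (n.factorial : ℂ) / (b : ℂ)
          * ((x : ℂ) + I * b) ^ (-(n + 1) : ℤ))
        (((-1 : ℂ)) ^ (n + 1) * (n.factorial : ℂ) / (b : ℂ)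
          * ((-(n + 1) : ℤ) * ((x : ℂ) + I * b) ^ ((-(n + 1) : ℤ) - 1))) x :=
      (aux_zpow b hb _ x).const_mul _
    rw [(aux_im hd).deriv]
    congr 1
    have : ((-(n + 1) : ℤ) - 1) = (-(n + 1 + 1) : ℤ) := by ring
    rw [this, Nat.factorial_succ]
    push_cast
    ring

/-- derivative estimates for F(x) = 1/(η+1+x²) with ν = (1/2)min{√η,1}. -/
theorem stmt_6 (η : ℝ) (hη : 0 < η) (a : ℕ) (ha : 1 ≤ a) (x : ℝ) :
    |iteratedDeriv a (fun y : ℝ => 1 / (η + 1 + y ^ 2)) x| ≤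
      (a.factorial : ℝ) / (min (Real.sqrt η) 1 / 2) ^ a * (1 / (η + 1 + x ^ 2)) := by
  have h1 : (0:ℝ) < η + 1 := by linarith
  set b := Real.sqrt (η + 1) with hbdef
  have hb : 0 < b := Real.sqrt_pos.mpr h1
  have hb2 : b ^ 2 = η + 1 := Real.sq_sqrt h1.le
  set ν := min (Real.sqrt η) 1 / 2 with hνdef
  have hν0 : 0 < ν := by
    have := Real.sqrt_pos.mpr hη
    have := lt_min this one_pos
    positivity
  have hν1 : ν ≤ 1 := by
    have : min (Real.sqrt η) 1 ≤ 1 := min_le_right _ _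
    rw [hνdef]; linarith
  have hνb : ν ≤ b := by
    have h3 : min (Real.sqrt η) 1 ≤ Real.sqrt η := min_le_left _ _
    have h4 : Real.sqrt η ≤ b := Real.sqrt_le_sqrt (by linarith)
    rw [hνdef]; linarith
  set S := Real.sqrt (η + 1 + x ^ 2) with hSdef
  have hS2 : S ^ 2 = η + 1 + x ^ 2 := Real.sq_sqrt (by positivity)
  have hS1 : 1 ≤ S := by
    nlinarith [hS2, Real.sqrt_nonneg (η + 1 + x ^ 2), sq_nonneg (S - 1), sq_nonneg x]
  have hS0 : 0 < S := lt_of_lt_of_le one_pos hS1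
  have habsw : ‖((x : ℂ) + I * b)‖ = S := by
    rw [Complex.norm_def]
    congr 1
    simp [Complex.normSq_apply]
    nlinarith
  rw [aux_formula η hη a x]
  refine le_trans (Complex.abs_im_le_norm _) ?_
  rw [norm_mul, norm_div, norm_mul, norm_pow, norm_zpow, habsw]
  simp only [norm_neg, norm_one, one_pow, one_mul, Complex.norm_natCast,
    Complex.norm_real, Real.norm_eq_abs, ← hbdef, abs_of_pos hb]
  rw [show (-((a:ℤ) + 1)) = -((a + 1 : ℕ) : ℤ) by push_cast; ring, zpow_neg, zpow_natCast]
  rw [← hS2]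
  obtain ⟨m, rfl⟩ : ∃ m, a = m + 1 := ⟨a - 1, by omega⟩
  have key : ν ^ (m + 1) * S ^ 2 ≤ b * S ^ (m + 1 + 1) := by
    have h5 : ν ^ m ≤ S ^ m :=
      pow_le_pow_left₀ hν0.le (le_trans hν1 hS1) m
    have h6 : ν ^ (m + 1) ≤ b * S ^ m := by
      rw [pow_succ']
      exact mul_le_mul hνb h5 (by positivity) hb.le
    calc ν ^ (m + 1) * S ^ 2 ≤ (b * S ^ m) * S ^ 2 :=
          mul_le_mul_of_nonneg_right h6 (by positivity)
      _ = b * S ^ (m + 1 + 1) := by ring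
  calc ((m + 1).factorial : ℝ) / b * (S ^ (m + 1 + 1))⁻¹
      = ((m + 1).factorial : ℝ) / (b * S ^ (m + 1 + 1)) := by
        rw [div_mul_eq_div_div_swap]; rw [div_div]; ring_nf
    _ ≤ ((m + 1).factorial : ℝ) / (ν ^ (m + 1) * S ^ 2) := by
        apply div_le_div_of_nonneg_left (by positivity) (by positivity) key
    _ = ((m + 1).factorial : ℝ) / ν ^ (m + 1) * (1 / S ^ 2) := by
        rw [div_mul_eq_div_div, div_div]
        ring_nf
end

section
/- Let V ⊂ ℝ be open, g : ℝ → V and φ : V → ℝ real-analytic, x ∈ ℝ, and ν > 0. Define the homogeneous analytic semi-norm at a point: |h|_{Ċ^ν_x} = Σ_{a≥1} (ν^a/a!) |h^{(a)}(x)|. If μ := |g|_{Ċ^ν_x} is such that φ has convergent derivative series at y = g(x) with |φ|_{Ċ^μ_y} = Σ_{a≥1} (μ^a/a!)|φ^{(a)}(y)| < ∞, then |φ∘g|_{Ċ^ν_x} ≤ |φ|_{Ċ^μ_y}. -/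
/-- The homogeneous analytic semi-norm at a point: |h|_{Ċ^ν_x} = Σ_{a≥1} (ν^a/a!) |h^{(a)}(x)|. -/
noncomputable def ptSeminorm (ν : ℝ) (h : ℝ → ℝ) (x : ℝ) : ℝ :=
  ∑' a : ℕ, ν ^ (a + 1) / ((a + 1).factorial : ℝ) * |iteratedDeriv (a + 1) h x|

open scoped ENNReal NNReal

lemma aux_tsum_pi_fin_prod (w : ℕ → ℝ≥0∞) : ∀ k : ℕ,
    ∑' b : Fin k → ℕ, ∏ i, w (b i) = (∑' m, w m) ^ k := by
  intro k
  induction k with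
  | zero =>
      rw [tsum_eq_single (fun i : Fin 0 => 0)
        (fun b hb => absurd (Subsingleton.elim b _) hb)]
      simp
  | succ k ih =>
      rw [← (Fin.consEquiv (fun _ : Fin (k+1) => ℕ)).tsum_eq]
      simp only [Fin.consEquiv_apply]
      rw [ENNReal.tsum_prod']
      simp only [Fin.prod_univ_succ, Fin.cons_zero, Fin.cons_succ]
      simp only [ENNReal.tsum_mul_left, ih, ENNReal.tsum_mul_right]
      rw [pow_succ, mul_comm]

lemma aux_deriv_coeff {f : ℝ → ℝ} {p : FormalMultilinearSeries ℝ ℝ ℝ} {x : ℝ} {r : ℝ≥0∞}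
    (h : HasFPowerSeriesOnBall f p x r) (n : ℕ) :
    iteratedDeriv n f x = (n.factorial : ℝ) * p.coeff n := by
  have h1 := h.factorial_smul (1 : ℝ) n
  rw [iteratedDeriv_eq_iteratedFDeriv, ← h1]
  simp only [nsmul_eq_mul]
  rfl

lemma aux_len {a : ℕ} (c : Composition (a + 1)) : c.length - 1 + 1 = c.length := by
  have := c.length_pos_of_pos (Nat.succ_pos a)
  omega

noncomputable def auxInj : (Σ a : ℕ, Composition (a + 1)) → (Σ k : ℕ, Fin (k + 1) → ℕ) :=
  fun z => ⟨z.2.length - 1, fun i => z.2.blocksFun (Fin.cast (aux_len z.2) i) - 1⟩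

noncomputable def auxInv : (Σ k : ℕ, Fin (k + 1) → ℕ) → (Σ a : ℕ, Composition (a + 1)) :=
  fun z => ⟨(∑ i, (z.2 i + 1)) - 1,
    { blocks := List.ofFn (fun i => z.2 i + 1)
      blocks_pos := by
        intro i hi
        rw [List.mem_ofFn] at hi
        obtain ⟨j, rfl⟩ := hi
        exact Nat.succ_pos _
      blocks_sum := by
        rw [List.sum_ofFn]
        have h0 : 0 < ∑ i, (z.2 i + 1) :=
          Finset.sum_pos (fun i _ => Nat.succ_pos _) ⟨0, Finset.mem_univ 0⟩
        omega }⟩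

lemma aux_sigma_comp_ext {a a' : ℕ} (c : Composition (a + 1)) (c' : Composition (a' + 1))
    (h : c.blocks = c'.blocks) :
    (⟨a, c⟩ : Σ k : ℕ, Composition (k + 1)) = ⟨a', c'⟩ := by
  have h2 : a = a' := by
    have e1 := c.blocks_sum
    have e2 := c'.blocks_sum
    rw [h] at e1
    omega
  subst h2
  congr 1
  cases c; cases c'
  simpa using h

lemma auxInj_leftInv : Function.LeftInverse auxInv auxInj := by
  rintro ⟨a, c⟩
  apply aux_sigma_comp_ext
  show List.ofFn (fun i => c.blocksFun (Fin.cast (aux_len c) i) - 1 + 1) = c.blocks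
  have hpt : (fun i => c.blocksFun (Fin.cast (aux_len c) i) - 1 + 1)
      = fun i => c.blocksFun (Fin.cast (aux_len c) i) := by
    funext i
    have := c.one_le_blocksFun (Fin.cast (aux_len c) i)
    omega
  rw [hpt, ← c.ofFn_blocksFun, List.ofFn_congr (aux_len c).symm c.blocksFun]

lemma auxInj_injective : Function.Injective auxInj :=
  auxInj_leftInv.injective

lemma aux_main (p q : FormalMultilinearSeries ℝ ℝ ℝ) (νE : ℝ≥0∞) :
    ∑' a : ℕ, νE ^ (a + 1) * (‖(q.comp p) (a + 1)‖₊ : ℝ≥0∞)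
      ≤ ∑' k : ℕ, (‖q (k + 1)‖₊ : ℝ≥0∞) *
          (∑' m : ℕ, νE ^ (m + 1) * (‖p (m + 1)‖₊ : ℝ≥0∞)) ^ (k + 1) := by
  set w : ℕ → ℝ≥0∞ := fun m => νE ^ (m + 1) * (‖p (m + 1)‖₊ : ℝ≥0∞) with hw
  set F : (Σ a : ℕ, Composition (a + 1)) → ℝ≥0∞ :=
    fun z => (‖q z.2.length‖₊ : ℝ≥0∞) * ∏ i, w (z.2.blocksFun i - 1) with hF
  set G : (Σ k : ℕ, Fin (k + 1) → ℕ) → ℝ≥0∞ :=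
    fun z => (‖q (z.1 + 1)‖₊ : ℝ≥0∞) * ∏ i, w (z.2 i) with hG
  have key : ∀ (n : ℕ) (c : Composition n),
      νE ^ n * ((‖q c.length‖₊ : ℝ≥0∞) * ∏ i, (‖p (c.blocksFun i)‖₊ : ℝ≥0∞))
        = (‖q c.length‖₊ : ℝ≥0∞) * ∏ i, w (c.blocksFun i - 1) := by
    intro n c
    have h1 : ∀ i : Fin c.length, w (c.blocksFun i - 1)
        = νE ^ (c.blocksFun i) * (‖p (c.blocksFun i)‖₊ : ℝ≥0∞) := by
      intro i
      rw [hw]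
      simp only
      rw [Nat.sub_add_cancel (c.one_le_blocksFun i)]
    calc νE ^ n * ((‖q c.length‖₊ : ℝ≥0∞) * ∏ i, (‖p (c.blocksFun i)‖₊ : ℝ≥0∞))
        = (‖q c.length‖₊ : ℝ≥0∞) *
            ((∏ i : Fin c.length, νE ^ (c.blocksFun i)) * ∏ i, (‖p (c.blocksFun i)‖₊ : ℝ≥0∞)) := by
          rw [Finset.prod_pow_eq_pow_sum, c.sum_blocksFun]; ring
      _ = (‖q c.length‖₊ : ℝ≥0∞) * ∏ i, w (c.blocksFun i - 1) := by
          rw [← Finset.prod_mul_distrib]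
          congr 1
          exact (Finset.prod_congr rfl (fun i _ => (h1 i).symm))
  have step1 : ∀ a : ℕ, νE ^ (a + 1) * (‖(q.comp p) (a + 1)‖₊ : ℝ≥0∞)
      ≤ ∑ c : Composition (a + 1), F ⟨a, c⟩ := by
    intro a
    have hn : (‖(q.comp p) (a + 1)‖₊ : ℝ≥0)
        ≤ ∑ c : Composition (a + 1), ‖q c.length‖₊ * ∏ i, ‖p (c.blocksFun i)‖₊ := by
      refine le_trans (nnnorm_sum_le _ _) ?_
      exact Finset.sum_le_sum fun c _ => q.compAlongComposition_nnnorm p c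
    have hn' : (‖(q.comp p) (a + 1)‖₊ : ℝ≥0∞)
        ≤ ∑ c : Composition (a + 1), (‖q c.length‖₊ : ℝ≥0∞) * ∏ i, (‖p (c.blocksFun i)‖₊ : ℝ≥0∞) := by
      have := ENNReal.coe_le_coe.2 hn
      refine this.trans_eq ?_
      push_cast
      rfl
    calc νE ^ (a + 1) * (‖(q.comp p) (a + 1)‖₊ : ℝ≥0∞)
        ≤ νE ^ (a + 1) * ∑ c : Composition (a + 1),
            (‖q c.length‖₊ : ℝ≥0∞) * ∏ i, (‖p (c.blocksFun i)‖₊ : ℝ≥0∞) :=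
          mul_le_mul_right hn' _
      _ = ∑ c : Composition (a + 1), F ⟨a, c⟩ := by
          rw [Finset.mul_sum]
          exact Finset.sum_congr rfl fun c _ => key (a + 1) c
  calc ∑' a : ℕ, νE ^ (a + 1) * (‖(q.comp p) (a + 1)‖₊ : ℝ≥0∞)
      ≤ ∑' a : ℕ, ∑ c : Composition (a + 1), F ⟨a, c⟩ := Summable.tsum_le_tsum step1 ENNReal.summable ENNReal.summable
    _ = ∑' z : Σ a : ℕ, Composition (a + 1), F z := by
        rw [ENNReal.tsum_sigma' F]
        exact tsum_congr fun a => (tsum_fintype _).symm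
    _ = ∑' z : Σ a : ℕ, Composition (a + 1), G (auxInj z) := by
        refine tsum_congr ?_
        rintro ⟨a, c⟩
        show _ = (‖q (c.length - 1 + 1)‖₊ : ℝ≥0∞)
            * ∏ i, w (c.blocksFun (Fin.cast (aux_len c) i) - 1)
        rw [Fin.prod_congr' (fun i => w (c.blocksFun i - 1)) (aux_len c), aux_len c]
    _ ≤ ∑' z : Σ k : ℕ, Fin (k + 1) → ℕ, G z :=
        ENNReal.tsum_comp_le_tsum_of_injective auxInj_injective G
    _ = ∑' k : ℕ, (‖q (k + 1)‖₊ : ℝ≥0∞) * (∑' m : ℕ, w m) ^ (k + 1) := by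
        rw [ENNReal.tsum_sigma' G]
        refine tsum_congr fun k => ?_
        simp only [hG]
        show ∑' b : Fin (k + 1) → ℕ, (‖q (k + 1)‖₊ : ℝ≥0∞) * ∏ i, w (b i) = _
        rw [ENNReal.tsum_mul_left, aux_tsum_pi_fin_prod w (k + 1)]

lemma aux_of_mul {E : Type*} [NormedAddCommGroup E] (c : ℝ) (hc : 0 ≤ c) (z : E) (n : ℕ) :
    ENNReal.ofReal (c ^ (n + 1) * ‖z‖) = (ENNReal.ofReal c) ^ (n + 1) * (‖z‖₊ : ℝ≥0∞) := by
  rw [ENNReal.ofReal_mul (pow_nonneg hc _), ENNReal.ofReal_pow hc, ofReal_norm, enorm_eq_nnnorm]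

/-- one-dimensional pointwise Faà di Bruno composition estimate for
homogeneous analytic semi-norms (Lemma B.4). -/
theorem stmt_13 (V : Set ℝ) (hV : IsOpen V) (g φ : ℝ → ℝ)
    (hgV : ∀ t : ℝ, g t ∈ V) (hg : ∀ t : ℝ, AnalyticAt ℝ g t)
    (hφ : ∀ y ∈ V, AnalyticAt ℝ φ y)
    (x ν : ℝ) (hν : 0 < ν)
    (hgs : Summable fun a : ℕ =>
      ν ^ (a + 1) / ((a + 1).factorial : ℝ) * |iteratedDeriv (a + 1) g x|)
    (hφs : Summable fun a : ℕ =>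
      (ptSeminorm ν g x) ^ (a + 1) / ((a + 1).factorial : ℝ) *
        |iteratedDeriv (a + 1) φ (g x)|) :
    ptSeminorm ν (φ ∘ g) x ≤ ptSeminorm (ptSeminorm ν g x) φ (g x) := by
  obtain ⟨p, rp, hp⟩ := hg x
  obtain ⟨q, rq, hq⟩ := hφ (g x) (hgV x)
  obtain ⟨rr, hr⟩ := HasFPowerSeriesAt.comp (⟨rq, hq⟩ : HasFPowerSeriesAt φ q (g x))
    (⟨rp, hp⟩ : HasFPowerSeriesAt g p x)
  set μ := ptSeminorm ν g x with hμ
  have nng : ∀ a : ℕ, 0 ≤ ν ^ (a + 1) / ((a + 1).factorial : ℝ) * |iteratedDeriv (a + 1) g x| :=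
    fun a => mul_nonneg (div_nonneg (pow_nonneg hν.le _) (Nat.cast_nonneg _)) (abs_nonneg _)
  have hμ0 : 0 ≤ μ := tsum_nonneg nng
  have nnφ : ∀ a : ℕ, 0 ≤ μ ^ (a + 1) / ((a + 1).factorial : ℝ) * |iteratedDeriv (a + 1) φ (g x)| :=
    fun a => mul_nonneg (div_nonneg (pow_nonneg hμ0 _) (Nat.cast_nonneg _)) (abs_nonneg _)
  have nnc : ∀ a : ℕ, 0 ≤ ν ^ (a + 1) / ((a + 1).factorial : ℝ) * |iteratedDeriv (a + 1) (φ ∘ g) x| :=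
    fun a => mul_nonneg (div_nonneg (pow_nonneg hν.le _) (Nat.cast_nonneg _)) (abs_nonneg _)
  have hfact : ∀ n : ℕ, ((n.factorial : ℝ)) ≠ 0 :=
    fun n => Nat.cast_ne_zero.2 n.factorial_ne_zero
  have hterm : ∀ (f : ℝ → ℝ) (P : FormalMultilinearSeries ℝ ℝ ℝ) (y : ℝ) (R : ℝ≥0∞),
      HasFPowerSeriesOnBall f P y R → ∀ (c : ℝ) (n : ℕ),
        c ^ (n + 1) / ((n + 1).factorial : ℝ) * |iteratedDeriv (n + 1) f y|
          = c ^ (n + 1) * ‖P (n + 1)‖ := by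
    intro f P y R hb c n
    rw [aux_deriv_coeff hb (n + 1), abs_mul, Nat.abs_cast,
      FormalMultilinearSeries.norm_apply_eq_norm_coef, Real.norm_eq_abs]
    field_simp
  set νE := ENNReal.ofReal ν with hνE
  set μE := ENNReal.ofReal μ with hμE'
  have hμE : μE = ∑' m : ℕ, νE ^ (m + 1) * (‖p (m + 1)‖₊ : ℝ≥0∞) := by
    rw [hμE', hμ, ptSeminorm, ENNReal.ofReal_tsum_of_nonneg nng hgs]
    exact tsum_congr fun a => by rw [hterm g p x rp hp ν a, aux_of_mul ν hν.le]
  have hRHS : ENNReal.ofReal (ptSeminorm μ φ (g x))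
      = ∑' k : ℕ, (‖q (k + 1)‖₊ : ℝ≥0∞) * μE ^ (k + 1) := by
    rw [ptSeminorm, ENNReal.ofReal_tsum_of_nonneg nnφ hφs]
    exact tsum_congr fun a => by
      rw [hterm φ q (g x) rq hq μ a, aux_of_mul μ hμ0, mul_comm]
  have main : (∑' a : ℕ, ENNReal.ofReal
        (ν ^ (a + 1) / ((a + 1).factorial : ℝ) * |iteratedDeriv (a + 1) (φ ∘ g) x|))
      ≤ ENNReal.ofReal (ptSeminorm μ φ (g x)) := by
    rw [hRHS, hμE]
    calc (∑' a : ℕ, ENNReal.ofReal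
          (ν ^ (a + 1) / ((a + 1).factorial : ℝ) * |iteratedDeriv (a + 1) (φ ∘ g) x|))
        = ∑' a : ℕ, νE ^ (a + 1) * (‖(q.comp p) (a + 1)‖₊ : ℝ≥0∞) :=
          tsum_congr fun a => by rw [hterm (φ ∘ g) (q.comp p) x rr hr ν a, aux_of_mul ν hν.le]
      _ ≤ _ := aux_main p q νE
  have hRHS0 : 0 ≤ ptSeminorm μ φ (g x) := tsum_nonneg nnφ
  have hL : ptSeminorm ν (φ ∘ g) x = (∑' a : ℕ, ENNReal.ofReal
      (ν ^ (a + 1) / ((a + 1).factorial : ℝ) * |iteratedDeriv (a + 1) (φ ∘ g) x|)).toReal := by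
    rw [ENNReal.tsum_toReal_eq (fun a => ENNReal.ofReal_ne_top), ptSeminorm]
    exact tsum_congr fun a => (ENNReal.toReal_ofReal (nnc a)).symm
  rw [hL]
  calc _ ≤ (ENNReal.ofReal (ptSeminorm μ φ (g x))).toReal :=
        ENNReal.toReal_mono ENNReal.ofReal_ne_top main
    _ = ptSeminorm μ φ (g x) := ENNReal.toReal_ofReal hRHS0
end
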